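/- arXiv:1509.05168 — 2 statements merged into one kernel-verified Lean document; each statement's English description precedes it below -/
import Mathlib

section
/- Let K ⊆ ℝ^n be an extended second order cone with exactly m Lorentz-cone blocks, and let (K, L, c) be a relaxation-sequence feasibility problem. Then every relaxation sequence for (K, L, c) has length at most m + 1. -/
open scoped RealInnerProductSpace Pointwise
open Classical

noncomputable section

/-- The Lorentz (second order) cone `SOC^{k+1} = {x = (x₀, x̄) : ‖x̄‖ ≤ x₀} ⊆ ℝ^{k+1}`. -/
def SOC (k : ℕ) : Set (EuclideanSpace ℝ (Fin (k + 1))) :=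
  {x | Real.sqrt (∑ j : Fin k, x j.succ ^ 2) ≤ x 0}

/-- The reflection `x' = (x₀, -x̄)` of `x` with respect to the Lorentz cone. -/
def reflect {k : ℕ} (x : EuclideanSpace ℝ (Fin (k + 1))) : EuclideanSpace ℝ (Fin (k + 1)) :=
  WithLp.toLp 2 fun j => if j = 0 then x 0 else - x j

/-- The closed half-space `H_d = {x : dᵀx ≥ 0}`. -/
def halfSpace {k : ℕ} (d : EuclideanSpace ℝ (Fin (k + 1))) :
    Set (EuclideanSpace ℝ (Fin (k + 1))) :=
  {x | 0 ≤ ⟪d, x⟫}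

/-- The ray `ray_d = {α • d : α ≥ 0}`. -/
def ray {k : ℕ} (d : EuclideanSpace ℝ (Fin (k + 1))) :
    Set (EuclideanSpace ℝ (Fin (k + 1))) :=
  {x | ∃ α : ℝ, 0 ≤ α ∧ x = α • d}

/-- A block of an extended second order cone: the trivial cone `{0}`, the whole space,
the Lorentz cone, a closed half-space `H_d` with `d ∈ SOC \ {0}`, or a ray `ray_d` with
`d ∈ SOC`. -/
def IsESOCBlock {k : ℕ} (B : Set (EuclideanSpace ℝ (Fin (k + 1)))) : Prop :=
  B = {0} ∨ B = Set.univ ∨ B = SOC k ∨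
    (∃ d ∈ SOC k, d ≠ 0 ∧ B = halfSpace d) ∨ ∃ d ∈ SOC k, B = ray d

/-- The total space `ℝ^n = ℝ^{n_1} × ⋯ × ℝ^{n_m}` with the Euclidean (ℓ²) structure. -/
abbrev TS {m : ℕ} (k : Fin m → ℕ) := PiLp 2 fun i => EuclideanSpace ℝ (Fin (k i + 1))

/-- The product cone `K = K^{n_1} × ⋯ × K^{n_m}` determined by the blocks `B i`. -/
def prodSet {m : ℕ} (k : Fin m → ℕ) (B : ∀ i, Set (EuclideanSpace ℝ (Fin (k i + 1)))) :
    Set (TS k) :=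
  {x | ∀ i, x i ∈ B i}

/-- `B` describes an extended second order cone (blockwise). -/
def IsESOC {m : ℕ} (k : Fin m → ℕ) (B : ∀ i, Set (EuclideanSpace ℝ (Fin (k i + 1)))) : Prop :=
  ∀ i, IsESOCBlock (B i)

/-- `H₁(a, K) = {i : K^{n_i} = SOC^{n_i}, a_{n_i} ∈ ri SOC^{n_i}}`. -/
def H1 {m : ℕ} (k : Fin m → ℕ) (B : ∀ i, Set (EuclideanSpace ℝ (Fin (k i + 1))))
    (a : TS k) : Set (Fin m) :=
  {i | B i = SOC (k i) ∧ a i ∈ intrinsicInterior ℝ (SOC (k i))}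

/-- `H₂(a, K) = {i : K^{n_i} = SOC^{n_i}, a_{n_i} ∈ (rel bd SOC^{n_i}) \ {0}}`. -/
def H2 {m : ℕ} (k : Fin m → ℕ) (B : ∀ i, Set (EuclideanSpace ℝ (Fin (k i + 1))))
    (a : TS k) : Set (Fin m) :=
  {i | B i = SOC (k i) ∧ a i ∈ intrinsicFrontier ℝ (SOC (k i)) ∧ a i ≠ 0}

/-- The relaxed cone `K̃` obtained from `K` and `a` (blockwise): block `i` becomes the whole
space if `i ∈ H₁(a, K)`, the half-space `H_{(a_{n_i})'}` if `i ∈ H₂(a, K)`, and is unchanged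
otherwise. -/
def relaxedBlocks {m : ℕ} (k : Fin m → ℕ) (B : ∀ i, Set (EuclideanSpace ℝ (Fin (k i + 1))))
    (a : TS k) : ∀ i, Set (EuclideanSpace ℝ (Fin (k i + 1))) :=
  fun i =>
    if i ∈ H1 k B a then Set.univ
    else if i ∈ H2 k B a then halfSpace (reflect (a i))
    else B i

/-- The affine set `L + c`. -/
def affineSet {V : Type*} [AddCommGroup V] [Module ℝ V] (L : Submodule ℝ V) (c : V) :
    Set V :=
  {x | x - c ∈ L}

/-- The distance between two sets. -/
def setDist {V : Type*} [NormedAddCommGroup V] (A B : Set V) : ℝ :=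
  sInf (Set.image2 dist A B)

/-- `(K, L, c)` is strongly feasible: `(L + c) ∩ ri K ≠ ∅`. -/
def StronglyFeasible {V : Type*} [NormedAddCommGroup V] [Module ℝ V]
    (K : Set V) (L : Submodule ℝ V) (c : V) : Prop :=
  (affineSet L c ∩ intrinsicInterior ℝ K).Nonempty

/-- `(K, L, c)` is weakly feasible: `K ∩ (L + c) ≠ ∅` but `(L + c) ∩ ri K = ∅`. -/
def WeaklyFeasible {V : Type*} [NormedAddCommGroup V] [Module ℝ V]
    (K : Set V) (L : Submodule ℝ V) (c : V) : Prop :=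
  (K ∩ affineSet L c).Nonempty ∧ affineSet L c ∩ intrinsicInterior ℝ K = ∅

/-- `(K, L, c)` is weakly infeasible: `K ∩ (L + c) = ∅` but `dist(K, L + c) = 0`. -/
def WeaklyInfeasible {V : Type*} [NormedAddCommGroup V] [Module ℝ V]
    (K : Set V) (L : Submodule ℝ V) (c : V) : Prop :=
  K ∩ affineSet L c = ∅ ∧ setDist K (affineSet L c) = 0

/-- `(K, L, c)` is strongly infeasible: `K ∩ (L + c) = ∅` and `dist(K, L + c) > 0`. -/
def StronglyInfeasible {V : Type*} [NormedAddCommGroup V] [Module ℝ V]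
    (K : Set V) (L : Submodule ℝ V) (c : V) : Prop :=
  K ∩ affineSet L c = ∅ ∧ 0 < setDist K (affineSet L c)

/-- `(K, L, c)` is in weak status: weakly feasible or weakly infeasible. -/
def WeakStatus {V : Type*} [NormedAddCommGroup V] [Module ℝ V]
    (K : Set V) (L : Submodule ℝ V) (c : V) : Prop :=
  WeaklyFeasible K L c ∨ WeaklyInfeasible K L c

/-- A relaxation sequence for `(K, L, c)`: a finite sequence of cones `K₁, …, K_γ` (given
blockwise; `blocks t` is `K_{t+1}` for `t < γ`, the point `c` plays no role in the data)
with `K₁ = K`, each `K_t` an extended second order cone, and for each step there exists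
`d ∈ K_t ∩ L` such that `K_{t+1}` is the relaxed cone obtained from `K_t` and `d`, with
`K_t` strictly contained in `K_{t+1}`. -/
structure RelaxSeq {m : ℕ} (k : Fin m → ℕ) (B : ∀ i, Set (EuclideanSpace ℝ (Fin (k i + 1))))
    (L : Submodule ℝ (TS k)) where
  /-- the length `γ` of the sequence -/
  gamma : ℕ
  gamma_pos : 0 < gamma
  /-- the cones of the sequence, given blockwise -/
  blocks : ℕ → ∀ i, Set (EuclideanSpace ℝ (Fin (k i + 1)))
  first : blocks 0 = B
  esoc : ∀ t, t < gamma → IsESOC k (blocks t)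
  step : ∀ t, t + 1 < gamma → ∃ d : TS k, d ∈ prodSet k (blocks t) ∧ d ∈ L ∧
    blocks (t + 1) = relaxedBlocks k (blocks t) d ∧
    prodSet k (blocks t) ⊂ prodSet k (blocks (t + 1))

/-- The blocks of the cone `K_γ` of the last problem of a relaxation sequence. -/
def RelaxSeq.lastBlocks {m : ℕ} {k : Fin m → ℕ}
    {B : ∀ i, Set (EuclideanSpace ℝ (Fin (k i + 1)))} {L : Submodule ℝ (TS k)}
    (S : RelaxSeq k B L) : ∀ i, Set (EuclideanSpace ℝ (Fin (k i + 1))) :=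
  S.blocks (S.gamma - 1)

/-- A relaxation sequence is maximal if the last problem admits no non-trivial relaxation,
i.e. every `d ∈ K_γ ∩ L` has `H₁(d, K_γ) ∪ H₂(d, K_γ) = ∅`. -/
def RelaxSeq.Maximal {m : ℕ} {k : Fin m → ℕ}
    {B : ∀ i, Set (EuclideanSpace ℝ (Fin (k i + 1)))} {L : Submodule ℝ (TS k)}
    (S : RelaxSeq k B L) : Prop :=
  ∀ d : TS k, d ∈ prodSet k S.lastBlocks → d ∈ L →
    H1 k S.lastBlocks d ∪ H2 k S.lastBlocks d = ∅

def lorentzBlocks {m : ℕ} (k : Fin m → ℕ) (B : ∀ i, Set (EuclideanSpace ℝ (Fin (k i + 1)))) :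
    Finset (Fin m) :=
  Finset.univ.filter fun i => B i = SOC (k i)

section Relaxation

variable {m : ℕ} {k : Fin m → ℕ} {B : ∀ i, Set (EuclideanSpace ℝ (Fin (k i + 1)))}

theorem relaxedBlocks_of_ne_SOC {a : TS k} {i : Fin m} (h : B i ≠ SOC (k i)) :
    relaxedBlocks k B a i = B i := by
  have h1 : i ∉ H1 k B a := fun hi => h hi.1
  have h2 : i ∉ H2 k B a := fun hi => h hi.1
  simp only [relaxedBlocks, h1, h2, if_false]

theorem exists_ne_of_prodSet_ssubset {B' : ∀ i, Set (EuclideanSpace ℝ (Fin (k i + 1)))}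
    (h : prodSet k B ⊂ prodSet k B') : ∃ i, B' i ≠ B i := by
  by_contra! hB
  exact h.ne (by rw [funext hB])

theorem lorentzBlocks_relaxedBlocks_ssubset {a : TS k}
    (h : prodSet k B ⊂ prodSet k (relaxedBlocks k B a)) :
    lorentzBlocks k (relaxedBlocks k B a) ⊂ lorentzBlocks k B := by
  have changed_is_SOC : ∀ i, relaxedBlocks k B a i ≠ B i → B i = SOC (k i) := fun i hne =>
    not_not.mp fun hB => hne (relaxedBlocks_of_ne_SOC hB)
  have hsub : lorentzBlocks k (relaxedBlocks k B a) ⊆ lorentzBlocks k B := by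
    intro i hi
    simp only [lorentzBlocks, Finset.mem_filter, Finset.mem_univ, true_and] at hi ⊢
    by_cases hB : B i = SOC (k i)
    · exact hB
    · exact absurd hi (relaxedBlocks_of_ne_SOC hB ▸ hB)
  obtain ⟨i, hne⟩ := exists_ne_of_prodSet_ssubset h
  refine (Finset.ssubset_iff_of_subset hsub).mpr ⟨i, ?_, ?_⟩
  · simpa [lorentzBlocks] using changed_is_SOC i hne
  · simpa [lorentzBlocks, changed_is_SOC i hne] using hne

end Relaxation

theorem RelaxSeq.card_lorentzBlocks_add_le {m : ℕ} {k : Fin m → ℕ}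
    {B : ∀ i, Set (EuclideanSpace ℝ (Fin (k i + 1)))} {L : Submodule ℝ (TS k)}
    (S : RelaxSeq k B L) (t : ℕ) (ht : t < S.gamma) :
    (lorentzBlocks k (S.blocks t)).card + t ≤ (lorentzBlocks k B).card := by
  induction t with
  | zero => simp [S.first]
  | succ t ih =>
    obtain ⟨d, -, -, hnext, hssub⟩ := S.step t ht
    rw [hnext] at hssub ⊢
    have hdrop := Finset.card_lt_card (lorentzBlocks_relaxedBlocks_ssubset hssub)
    have hprev := ih (by omega)
    omega

theorem relaxation_sequence_length_le_general {m : ℕ} (k : Fin m → ℕ)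
    (B : ∀ i, Set (EuclideanSpace ℝ (Fin (k i + 1))))
    (L : Submodule ℝ (TS k)) (mL : ℕ)
    (hmL : (Finset.univ.filter fun i => B i = SOC (k i)).card = mL)
    (S : RelaxSeq k B L) :
    S.gamma ≤ mL + 1 := by
  have hlast := S.card_lorentzBlocks_add_le (S.gamma - 1) (Nat.sub_one_lt_of_lt S.gamma_pos)
  have hfirst : (lorentzBlocks k B).card = mL := hmL
  omega

/-- **Bound on the length of relaxation sequences.**  Let `K` be an extended second order
cone with exactly `mL` Lorentz-cone blocks and let `(K, L, c)` be a feasibility problem.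
Then every relaxation sequence for `(K, L, c)` has length at most `mL + 1`. -/
theorem relaxation_sequence_length_le {m : ℕ} (k : Fin m → ℕ)
    (B : ∀ i, Set (EuclideanSpace ℝ (Fin (k i + 1)))) (hB : IsESOC k B)
    (L : Submodule ℝ (TS k)) (c : TS k) (mL : ℕ)
    (hmL : (Finset.univ.filter fun i => B i = SOC (k i)).card = mL)
    (S : RelaxSeq k B L) :
    S.gamma ≤ mL + 1 :=
  relaxation_sequence_length_le_general k B L mL hmL S

end
end

section
/- Let K ⊆ ℝ^n be a closed convex cone, L ⊆ ℝ^n a linear subspace, and c ∈ ℝ^n. Then the feasibility problem (K, L, c) is weakly feasible (i.e., K ∩ (L + c) ≠ ∅ but (L + c) ∩ ri K = ∅) if and only if there exist x ∈ K ∩ (L + c) and w ∈ (K* \ K^⊥) ∩ L^⊥ with w^T c = 0. -/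
/-!
If `w ∈ K*` vanishes on `L + c` but not on `K`, it is strictly positive on `ri K` (from a point
of `ri K` one can move a little beyond it, away from any point of `K`), so `L + c` misses `ri K`.
Conversely, if `x₀ ∈ K ∩ (L + c)` and `L + c` misses `ri K`, then `0` is not in the relative
interior of the convex set `K - (L + c)`: otherwise a short step from `0` away from `y - x₀`,
`y ∈ ri K`, yields a point of `ri K` in `L + c`. Properly separating `0` from `K - (L + c)` inside
its span gives `w` with `⟪w, k - a⟫ ≥ 0` on `K - (L + c)` and `> 0` somewhere; invariance of
`L + c` under `L` forces `w ∈ L^⊥`, and the cone property of `K` turns `⟪w, k⟫ ≥ ⟪w, c⟫` into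
`w ∈ K*` with `⟪w, c⟫ = 0`.
-/

open scoped RealInnerProductSpace Pointwise
open Topology

lemma image_interior_preimage_subtype_congr {α : Type*} [TopologicalSpace α] {p q : α → Prop}
    (h : ∀ x, p x ↔ q x) (s : Set α) :
    ((↑) '' interior ((↑) ⁻¹' s : Set (Subtype p)) : Set α) =
      (↑) '' interior ((↑) ⁻¹' s : Set (Subtype q)) := by
  obtain rfl : p = q := funext fun x => propext (h x)
  rfl

section NormedSpace

variable {E : Type*} [NormedAddCommGroup E] [NormedSpace ℝ E] {s : Set E}

lemma intrinsicInterior_eq_image_interior_span (h0 : (0 : E) ∈ s) :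
    intrinsicInterior ℝ s = (↑) '' interior ((↑) ⁻¹' s : Set (Submodule.span ℝ s)) := by
  refine image_interior_preimage_subtype_congr (fun x => ?_) s
  rw [← SetLike.mem_coe, ← Set.insert_eq_of_mem h0, affineSpan_insert_zero, SetLike.mem_coe,
    Submodule.span_insert_zero]

lemma exists_add_smul_sub_mem_of_mem_intrinsicInterior (h0 : (0 : E) ∈ s) {x y : E}
    (hx : x ∈ intrinsicInterior ℝ s) (hy : y ∈ Submodule.span ℝ s) :
    ∃ t : ℝ, 0 < t ∧ x + t • (x - y) ∈ s := by
  rw [intrinsicInterior_eq_image_interior_span h0] at hx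
  obtain ⟨x, hx, rfl⟩ := hx
  have hcont : Continuous fun t : ℝ => x + t • (x - ⟨y, hy⟩) := by fun_prop
  have hnhds : ∀ᶠ t in 𝓝 (0 : ℝ),
      x + t • (x - ⟨y, hy⟩) ∈ ((↑) ⁻¹' s : Set (Submodule.span ℝ s)) :=
    hcont.continuousAt.preimage_mem_nhds (by simpa using mem_interior_iff_mem_nhds.mp hx)
  exact hnhds.exists_gt

lemma Convex.combo_intrinsicInterior_self_mem_intrinsicInterior (hs : Convex ℝ s)
    (h0 : (0 : E) ∈ s) {x y : E} (hx : x ∈ intrinsicInterior ℝ s) (hy : y ∈ s) {a b : ℝ}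
    (ha : 0 < a) (hb : 0 ≤ b) (hab : a + b = 1) : a • x + b • y ∈ intrinsicInterior ℝ s := by
  rw [intrinsicInterior_eq_image_interior_span h0] at hx ⊢
  obtain ⟨x, hx, rfl⟩ := hx
  exact ⟨a • x + b • ⟨y, Submodule.subset_span hy⟩,
    (hs.linear_preimage (Submodule.span ℝ s).subtype).combo_interior_self_mem_interior
      hx hy ha hb hab, rfl⟩

lemma zero_notMem_intrinsicInterior_sub [FiniteDimensional ℝ E] {K A : Set E}
    (hK : Convex ℝ K) (hK0 : (0 : E) ∈ K) (hA : Convex ℝ A) {x₀ : E} (hx₀K : x₀ ∈ K)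
    (hx₀A : x₀ ∈ A) (hdisj : Disjoint A (intrinsicInterior ℝ K)) :
    (0 : E) ∉ intrinsicInterior ℝ (K - A) := by
  intro h0
  obtain ⟨y, hy⟩ := Set.Nonempty.intrinsicInterior hK ⟨0, hK0⟩
  have h0KA : (0 : E) ∈ K - A := ⟨x₀, hx₀K, x₀, hx₀A, sub_self x₀⟩
  have hyx₀ : y - x₀ ∈ K - A := ⟨y, intrinsicInterior_subset hy, x₀, hx₀A, rfl⟩
  obtain ⟨t, ht, hmem⟩ :=
    exists_add_smul_sub_mem_of_mem_intrinsicInterior h0KA h0 (Submodule.subset_span hyx₀)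
  obtain ⟨k, hk, a, ha, hka⟩ := Set.mem_sub.mp hmem
  -- as `k - a = t • (x₀ - y)`, this point is a convex combination of `y, k` and also of `x₀, a`
  have heq : (t / (1 + t)) • y + (1 / (1 + t)) • k = (t / (1 + t)) • x₀ + (1 / (1 + t)) • a := by
    rw [show k = a + t • (x₀ - y) by linear_combination (norm := module) hka]
    module
  have hab : t / (1 + t) + 1 / (1 + t) = 1 := by field_simp; ring
  exact hdisj.ne_of_mem (hA hx₀A ha (by positivity) (by positivity) hab)
    (hK.combo_intrinsicInterior_self_mem_intrinsicInterior hK0 hy hk (by positivity)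
      (by positivity) hab) heq.symm

end NormedSpace

section InnerProductSpace

variable {E : Type*} [NormedAddCommGroup E] [InnerProductSpace ℝ E] {s : Set E}

lemma inner_pos_of_mem_intrinsicInterior (h0 : (0 : E) ∈ s) {w : E}
    (hw : ∀ z ∈ s, 0 ≤ ⟪w, z⟫) (hpos : ∃ z ∈ s, 0 < ⟪w, z⟫) {y : E}
    (hy : y ∈ intrinsicInterior ℝ s) : 0 < ⟪w, y⟫ := by
  obtain ⟨z, hz, hwz⟩ := hpos
  obtain ⟨t, ht, hmem⟩ :=
    exists_add_smul_sub_mem_of_mem_intrinsicInterior h0 hy (Submodule.subset_span hz)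
  have := hw _ hmem
  rw [inner_add_right, inner_smul_right, inner_sub_right] at this
  nlinarith

lemma exists_inner_nonneg_pos_of_zero_notMem_intrinsicInterior [FiniteDimensional ℝ E]
    (hs : Convex ℝ s) (h0 : (0 : E) ∈ s) (hni : (0 : E) ∉ intrinsicInterior ℝ s) :
    ∃ w : E, (∀ u ∈ s, 0 ≤ ⟪w, u⟫) ∧ ∃ u ∈ s, 0 < ⟪w, u⟫ := by
  set M := Submodule.span ℝ s
  set s' : Set M := (↑) ⁻¹' s
  have hri := intrinsicInterior_eq_image_interior_span h0
  have hs' : Convex ℝ s' := hs.linear_preimage M.subtype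
  have hne : (interior s').Nonempty := by
    simpa [hri] using Set.Nonempty.intrinsicInterior hs ⟨0, h0⟩
  have h0' : (0 : M) ∉ interior s' := fun h => hni (hri ▸ ⟨0, h, rfl⟩)
  obtain ⟨f, hf⟩ := geometric_hahn_banach_open_point hs'.interior isOpen_interior h0'
  rw [map_zero] at hf
  have hf_le : ∀ u ∈ s', f u ≤ 0 := by
    have : closure (interior s') ⊆ {u | f u ≤ 0} :=
      closure_minimal (fun u hu => (hf u hu).le) (isClosed_le f.continuous continuous_const)
    rw [hs'.closure_interior_eq_closure_of_nonempty_interior hne] at this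
    exact fun u hu => this (subset_closure hu)
  set w : M := (InnerProductSpace.toDual ℝ M).symm (-f)
  have hw : ∀ u : M, ⟪(w : E), u⟫ = -f u := fun u => by
    rw [← Submodule.coe_inner, InnerProductSpace.toDual_symm_apply]
    rfl
  obtain ⟨y, hy⟩ := hne
  refine ⟨w, fun u hu => ?_, y, interior_subset (s := s') hy, ?_⟩
  · have := hw ⟨u, Submodule.subset_span hu⟩
    linarith [hf_le ⟨u, Submodule.subset_span hu⟩ hu]
  · linarith [hw y, hf y hy]

lemma inner_nonneg_of_forall_le_inner {K : Set E}
    (hK : ∀ x ∈ K, ∀ t : ℝ, 0 ≤ t → t • x ∈ K) {w : E} {r : ℝ} (h : ∀ x ∈ K, r ≤ ⟪w, x⟫) :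
    ∀ x ∈ K, 0 ≤ ⟪w, x⟫ := by
  intro x hx
  by_contra! hneg
  have hr : r ≤ 0 := by simpa using h _ (hK x hx 0 le_rfl)
  have := h _ (hK x hx ((r - 1) / ⟪w, x⟫) (div_nonneg_of_nonpos (by linarith) hneg.le))
  rw [inner_smul_right, div_mul_cancel₀ _ hneg.ne] at this
  linarith

lemma Submodule.mem_orthogonal_of_forall_inner_nonneg {L : Submodule ℝ E} {w : E}
    (h : ∀ l ∈ L, 0 ≤ ⟪w, l⟫) : w ∈ Lᗮ :=
  (Submodule.mem_orthogonal' L w).mpr fun l hl =>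
    le_antisymm (by simpa using h (-l) (L.neg_mem hl)) (h l hl)

lemma convex_setOf_sub_mem (L : Submodule ℝ E) (c : E) : Convex ℝ {x | x - c ∈ L} := by
  convert L.convex.translate_preimage_left (-c) using 1
  ext x
  simp [sub_eq_add_neg]

end InnerProductSpace

section Feasibility

variable {E : Type*} [NormedAddCommGroup E] [InnerProductSpace ℝ E] {K : Set E}
  {L : Submodule ℝ E} {c : E}

lemma exists_reducing_direction_of_disjoint_intrinsicInterior [FiniteDimensional ℝ E]
    (hKconv : Convex ℝ K) (hK0 : (0 : E) ∈ K) (hKcone : ∀ x ∈ K, ∀ t : ℝ, 0 ≤ t → t • x ∈ K)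
    {x₀ : E} (hx₀K : x₀ ∈ K) (hx₀L : x₀ - c ∈ L)
    (hdisj : Disjoint {x | x - c ∈ L} (intrinsicInterior ℝ K)) :
    ∃ w, (∀ z ∈ K, 0 ≤ ⟪w, z⟫) ∧ (∃ z ∈ K, 0 < ⟪w, z⟫) ∧ w ∈ Lᗮ ∧ ⟪w, c⟫ = 0 := by
  set A := {x | x - c ∈ L}
  have hcA : c ∈ A := by simp [A]
  obtain ⟨w, hw, _, ⟨k, hk, a, ha, rfl⟩, hpos⟩ :=
    exists_inner_nonneg_pos_of_zero_notMem_intrinsicInterior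
      (hKconv.sub (convex_setOf_sub_mem L c)) ⟨x₀, hx₀K, x₀, hx₀L, sub_self x₀⟩
      (zero_notMem_intrinsicInterior_sub hKconv hK0 (convex_setOf_sub_mem L c) hx₀K hx₀L hdisj)
  have hwL : w ∈ Lᗮ := Submodule.mem_orthogonal_of_forall_inner_nonneg fun l hl => by
    have hl' : x₀ - l ∈ A := by simpa [A, sub_right_comm] using L.sub_mem hx₀L hl
    simpa using hw _ ⟨x₀, hx₀K, x₀ - l, hl', sub_sub_cancel x₀ l⟩
  have hwA : ∀ a ∈ A, ⟪w, a⟫ = ⟪w, c⟫ := fun a ha => by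
    have := Submodule.inner_left_of_mem_orthogonal ha hwL
    rw [inner_sub_right] at this
    linarith
  have hwK : ∀ z ∈ K, 0 ≤ ⟪w, z⟫ := inner_nonneg_of_forall_le_inner hKcone fun z hz => by
    simpa [inner_sub_right] using hw _ ⟨z, hz, c, hcA, rfl⟩
  have hwc : ⟪w, c⟫ = 0 :=
    le_antisymm (by simpa [inner_sub_right] using hw _ ⟨0, hK0, c, hcA, rfl⟩)
      (hwA x₀ hx₀L ▸ hwK x₀ hx₀K)
  refine ⟨w, hwK, ⟨k, hk, ?_⟩, hwL, hwc⟩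
  rw [inner_sub_right, hwA a ha, hwc] at hpos
  linarith

lemma disjoint_intrinsicInterior_of_reducing_direction (hK0 : (0 : E) ∈ K) {w : E}
    (hwK : ∀ z ∈ K, 0 ≤ ⟪w, z⟫) (hpos : ∃ z ∈ K, 0 < ⟪w, z⟫) (hwL : w ∈ Lᗮ)
    (hwc : ⟪w, c⟫ = 0) : Disjoint {x | x - c ∈ L} (intrinsicInterior ℝ K) :=
  Set.disjoint_left.mpr fun y hyA hy => by
    have := Submodule.inner_left_of_mem_orthogonal hyA hwL
    rw [inner_sub_right, hwc, sub_zero] at this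
    exact (inner_pos_of_mem_intrinsicInterior hK0 hwK hpos hy).ne' this

end Feasibility

theorem weakly_feasible_iff_general {n : ℕ}
    (K : Set (EuclideanSpace ℝ (Fin n))) (L : Submodule ℝ (EuclideanSpace ℝ (Fin n)))
    (c : EuclideanSpace ℝ (Fin n))
    (hKconv : Convex ℝ K) (hK0 : (0 : EuclideanSpace ℝ (Fin n)) ∈ K)
    (hKcone : ∀ x ∈ K, ∀ t : ℝ, 0 ≤ t → t • x ∈ K) :
    ((K ∩ {x | x - c ∈ L}).Nonempty ∧ {x | x - c ∈ L} ∩ intrinsicInterior ℝ K = ∅) ↔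
      ((∃ x, x ∈ K ∩ {x | x - c ∈ L}) ∧
        ∃ w, (∀ z ∈ K, 0 ≤ ⟪w, z⟫) ∧ ¬(∀ z ∈ K, ⟪w, z⟫ = (0 : ℝ)) ∧ w ∈ Lᗮ ∧
          ⟪w, c⟫ = (0 : ℝ)) := by
  rw [← Set.disjoint_iff_inter_eq_empty]
  constructor
  · rintro ⟨⟨x₀, hx₀K, hx₀L⟩, hdisj⟩
    obtain ⟨w, hwK, ⟨z, hzK, hz⟩, hwL, hwc⟩ :=
      exists_reducing_direction_of_disjoint_intrinsicInterior hKconv hK0 hKcone hx₀K hx₀L hdisj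
    exact ⟨⟨x₀, hx₀K, hx₀L⟩, w, hwK, fun h => hz.ne' (h z hzK), hwL, hwc⟩
  · rintro ⟨hfeas, w, hwK, hw0, hwL, hwc⟩
    obtain ⟨z, hzK, hz⟩ := not_forall₂.mp hw0
    exact ⟨hfeas, disjoint_intrinsicInterior_of_reducing_direction hK0 hwK
      ⟨z, hzK, (hwK z hzK).lt_of_ne' hz⟩ hwL hwc⟩

/-- **Characterization of weak feasibility.**
Let `K ⊆ ℝ^n` be a closed convex cone, `L ⊆ ℝ^n` a linear subspace and `c ∈ ℝ^n`.  Then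
`(K, L, c)` is weakly feasible (i.e. `K ∩ (L + c) ≠ ∅` but `(L + c) ∩ ri K = ∅`) if and
only if there exist `x ∈ K ∩ (L + c)` and `w ∈ (K* \ K^⊥) ∩ L^⊥` with `wᵀc = 0`. -/
theorem weakly_feasible_iff {n : ℕ}
    (K : Set (EuclideanSpace ℝ (Fin n))) (L : Submodule ℝ (EuclideanSpace ℝ (Fin n)))
    (c : EuclideanSpace ℝ (Fin n))
    (hKclosed : IsClosed K) (hKconv : Convex ℝ K) (hK0 : (0 : EuclideanSpace ℝ (Fin n)) ∈ K)
    (hKcone : ∀ x ∈ K, ∀ t : ℝ, 0 ≤ t → t • x ∈ K) :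
    ((K ∩ {x | x - c ∈ L}).Nonempty ∧ {x | x - c ∈ L} ∩ intrinsicInterior ℝ K = ∅) ↔
      ((∃ x, x ∈ K ∩ {x | x - c ∈ L}) ∧
        ∃ w, (∀ z ∈ K, 0 ≤ ⟪w, z⟫) ∧ ¬(∀ z ∈ K, ⟪w, z⟫ = (0 : ℝ)) ∧ w ∈ Lᗮ ∧
          ⟪w, c⟫ = (0 : ℝ)) :=
  weakly_feasible_iff_general K L c hKconv hK0 hKcone
end
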